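/- For every n ≥ 2, the coefficient sequence of Q_n is log-concave: for every k ≥ 1, q_{n,k}² ≥ q_{n,k−1} · q_{n,k+1}. -/
import Mathlib


open Polynomial

/-- The cube polynomials `Q n` of the matchable Lucas cubes. -/
noncomputable def Q : ℕ → Polynomial ℤ
  | 0 => 1
  | 1 => 2 + X
  | 2 => 3 + 2 * X
  | 3 => 4 + 3 * X
  | (n + 4) => Q (n + 3) + (1 + X) * Q (n + 2)

/-- `q n k` : the number of `k`-dimensional induced hypercubes of `Ω_n`,
i.e. the coefficient of `x^k` in `Q n`. -/
noncomputable def q (n k : ℕ) : ℤ := (Q n).coeff k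

lemma Q_rec (n : ℕ) : Q (n + 4) = Q (n + 3) + (1 + X) * Q (n + 2) := rfl

lemma q_rec0 (n : ℕ) : q (n + 4) 0 = q (n + 3) 0 + q (n + 2) 0 := by
  simp only [q, Q_rec, coeff_add, add_mul, one_mul, mul_coeff_zero, coeff_X_zero]
  ring

lemma q_recS (n k : ℕ) :
    q (n + 4) (k + 1) = q (n + 3) (k + 1) + q (n + 2) (k + 1) + q (n + 2) k := by
  simp only [q, Q_rec, coeff_add, add_mul, one_mul, coeff_X_mul]
  ring

lemma q2_0 : q 2 0 = 3 := by simp [q, Q]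
lemma q2_1 : q 2 1 = 2 := by simp [q, Q]
lemma q2_big (k : ℕ) : q 2 (k + 2) = 0 := by
  simp [q, Q, coeff_ofNat_succ, coeff_X, if_neg (show ¬(1 = k + 2) by omega)]
lemma q3_0 : q 3 0 = 4 := by simp [q, Q]
lemma q3_1 : q 3 1 = 3 := by simp [q, Q]
lemma q3_big (k : ℕ) : q 3 (k + 2) = 0 := by
  simp [q, Q, coeff_ofNat_succ, coeff_X, if_neg (show ¬(1 = k + 2) by omega)]

/-- The inductive invariant relating two consecutive coefficient rows. -/
structure LCInv (a b : ℕ → ℤ) : Prop where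
  na : ∀ k, 0 ≤ a k
  nb : ∀ k, 0 ≤ b k
  za : ∀ k, 0 < a (k + 1) → 0 < a k
  zb : ∀ k, 0 < b (k + 1) → 0 < b k
  mon : ∀ k, b k ≤ a k
  dg : ∀ k, 0 < a (k + 2) → 0 < b (k + 1)
  la : ∀ k, a k * a (k + 2) ≤ a (k + 1) * a (k + 1)
  lb : ∀ k, b k * b (k + 2) ≤ b (k + 1) * b (k + 1)
  p1 : ∀ k, a k * b (k + 1) ≤ a (k + 1) * b k
  p2 : ∀ k, a (k + 2) * b k ≤ a (k + 1) * b (k + 1)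
  p3 : ∀ k, a k * b (k + 2) ≤ a (k + 1) * b (k + 1)
  s10 : a 1 * b 0 ≤ a 0 * (b 0 + b 1)
  s1 : ∀ k, a (k + 2) * (b k + b (k + 1)) ≤ a (k + 1) * (b (k + 1) + b (k + 2))

namespace LCInv

variable {a b : ℕ → ℤ}

/-- order-2 log-concavity of `b`. -/
lemma lb2 (h : LCInv a b) (k : ℕ) : b k * b (k + 3) ≤ b (k + 1) * b (k + 2) := by
  rcases (h.nb (k + 1)).eq_or_lt with h1 | h1
  · have h3 : b (k + 3) = 0 := by
      by_contra hc
      have h3' : 0 < b (k + 3) := lt_of_le_of_ne (h.nb _) (Ne.symm hc)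
      have := h.zb (k + 1) (h.zb (k + 2) h3')
      omega
    rw [h3, mul_zero]
    exact mul_nonneg (h.nb _) (h.nb _)
  rcases (h.nb (k + 2)).eq_or_lt with h2 | h2
  · have h3 : b (k + 3) = 0 := by
      by_contra hc
      have h3' : 0 < b (k + 3) := lt_of_le_of_ne (h.nb _) (Ne.symm hc)
      have := h.zb (k + 2) h3'
      omega
    rw [h3, mul_zero]
    exact mul_nonneg (h.nb _) (h.nb _)
  -- both b(k+1), b(k+2) positive
  have e1 := mul_le_mul_of_nonneg_right (h.lb k) (h.nb (k + 3))
  have e2 := mul_le_mul_of_nonneg_left (h.lb (k + 1)) (h.nb (k + 1))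
  have key : (b k * b (k + 3)) * (b (k + 1) * b (k + 2)) ≤
      (b (k + 1) * b (k + 2)) * (b (k + 1) * b (k + 2)) := by nlinarith
  have hp : 0 < b (k + 1) * b (k + 2) := mul_pos h1 h2
  exact le_of_mul_le_mul_right (by linarith [key]) hp

/-- cross inequality at distance two. -/
lemma d2 (h : LCInv a b) (k : ℕ) : a k * b (k + 2) ≤ a (k + 2) * b k := by
  rcases (h.nb (k + 1)).eq_or_lt with h1 | h1
  · have h3 : b (k + 2) = 0 := by
      by_contra hc
      have := h.zb (k + 1) (lt_of_le_of_ne (h.nb _) (Ne.symm hc))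
      omega
    rw [h3, mul_zero]
    exact mul_nonneg (h.na _) (h.nb _)
  rcases (h.na (k + 1)).eq_or_lt with h2 | h2
  · have h3 : b (k + 2) = 0 := by
      by_contra hc
      have hb2 : 0 < b (k + 2) := lt_of_le_of_ne (h.nb _) (Ne.symm hc)
      have := lt_of_lt_of_le (h.zb (k + 1) hb2) (h.mon (k + 1))
      omega
    rw [h3, mul_zero]
    exact mul_nonneg (h.na _) (h.nb _)
  have t1 := mul_le_mul_of_nonneg_right (h.p1 (k + 1))
    (mul_nonneg (h.na k) (h.nb (k + 1)))
  have t2 := mul_le_mul_of_nonneg_right (h.p1 k)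
    (mul_nonneg (h.na (k + 2)) (h.nb (k + 1)))
  have key : (a k * b (k + 2)) * (a (k + 1) * b (k + 1)) ≤
      (a (k + 2) * b k) * (a (k + 1) * b (k + 1)) := by nlinarith [t1, t2]
  exact le_of_mul_le_mul_right key (mul_pos h2 h1)

/-- shifted cross inequality. -/
lemma d3 (h : LCInv a b) (k : ℕ) : a (k + 3) * b k ≤ a (k + 2) * b (k + 1) := by
  rcases (h.nb (k + 1)).eq_or_lt with h1 | h1
  · have h3 : a (k + 3) = 0 := by
      by_contra hc
      have ha3 : 0 < a (k + 3) := lt_of_le_of_ne (h.na _) (Ne.symm hc)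
      have := h.zb (k + 1) (h.dg (k + 1) ha3)
      omega
    rw [h3, zero_mul]
    exact mul_nonneg (h.na _) (h.nb _)
  rcases (h.nb (k + 2)).eq_or_lt with h2 | h2
  · have h3 : a (k + 3) = 0 := by
      by_contra hc
      have ha3 : 0 < a (k + 3) := lt_of_le_of_ne (h.na _) (Ne.symm hc)
      have hb : 0 < b (k + 2) := h.dg (k + 1) ha3
      omega
    rw [h3, zero_mul]
    exact mul_nonneg (h.na _) (h.nb _)
  have e1 := mul_le_mul_of_nonneg_right (h.p2 (k + 1)) (h.nb k)
  have e2 := mul_le_mul_of_nonneg_left (h.lb k) (h.na (k + 2))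
  have key : (a (k + 3) * b k) * (b (k + 1) * b (k + 2)) ≤
      (a (k + 2) * b (k + 1)) * (b (k + 1) * b (k + 2)) := by nlinarith
  exact le_of_mul_le_mul_right key (mul_pos h1 h2)

end LCInv

/-- The induction step. -/
lemma inv_step {a b A : ℕ → ℤ} (ih : LCInv a b)
    (hA0 : A 0 = a 0 + b 0) (hAS : ∀ k, A (k + 1) = a (k + 1) + b (k + 1) + b k) :
    LCInv A a := by
  have na : ∀ k, 0 ≤ A k := by
    intro k
    cases k with
    | zero => rw [hA0]; linarith [ih.na 0, ih.nb 0]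
    | succ j => rw [hAS]; linarith [ih.na (j + 1), ih.nb (j + 1), ih.nb j]
  refine ⟨na, ih.na, ?_, ih.za, ?_, ?_, ?_, ih.la, ?_, ?_, ?_, ?_, ?_⟩
  · -- za
    intro k
    cases k with
    | zero =>
      intro hpos
      rw [hAS] at hpos
      rw [hA0]
      have h3 : 0 < a 1 ∨ 0 < b 1 ∨ 0 < b 0 := by
        by_contra hc
        push_neg at hc
        linarith [hc.1, hc.2.1, hc.2.2]
      rcases h3 with h3 | h3 | h3
      · linarith [ih.za 0 h3, ih.nb 0]
      · linarith [ih.zb 0 h3, ih.na 0]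
      · linarith [ih.na 0]
    | succ j =>
      intro hpos
      rw [hAS] at hpos
      rw [hAS]
      have h3 : 0 < a (j + 2) ∨ 0 < b (j + 2) ∨ 0 < b (j + 1) := by
        by_contra hc
        push_neg at hc
        linarith [hc.1, hc.2.1, hc.2.2]
      rcases h3 with h3 | h3 | h3
      · linarith [ih.za (j + 1) h3, ih.nb (j + 1), ih.nb j]
      · linarith [ih.zb (j + 1) h3, ih.na (j + 1), ih.nb j]
      · linarith [ih.na (j + 1), ih.nb j, ih.zb j h3]
  · -- mon
    intro k
    cases k with
    | zero => rw [hA0]; linarith [ih.nb 0]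
    | succ j => rw [hAS]; linarith [ih.nb (j + 1), ih.nb j]
  · -- dg
    intro k
    intro hpos
    rw [hAS] at hpos
    have h3 : 0 < a (k + 2) ∨ 0 < b (k + 2) ∨ 0 < b (k + 1) := by
      by_contra hc
      push_neg at hc
      linarith [hc.1, hc.2.1, hc.2.2]
    rcases h3 with h3 | h3 | h3
    · exact ih.za (k + 1) h3
    · exact lt_of_lt_of_le (ih.zb (k + 1) h3) (ih.mon (k + 1))
    · exact lt_of_lt_of_le h3 (ih.mon (k + 1))
  · -- la
    intro k
    cases k with
    | zero =>
      rw [hA0, hAS, hAS]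
      nlinarith [ih.la 0, ih.lb 0, ih.p2 0, ih.p3 0, ih.p1 0,
        mul_nonneg (ih.na 1) (ih.nb 0), mul_nonneg (ih.nb 0) (ih.nb 1),
        sq_nonneg (b 0), mul_self_nonneg (b 0)]
    | succ j =>
      rw [hAS, hAS, hAS]
      nlinarith [ih.la (j + 1), ih.lb (j + 1), ih.lb j, ih.p3 (j + 1),
        ih.p2 (j + 1), ih.p1 (j + 1), ih.d3 j, ih.lb2 j]
  · -- p1
    intro k
    cases k with
    | zero =>
      rw [hA0, hAS]
      nlinarith [ih.s10]
    | succ j =>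
      rw [hAS, hAS]
      nlinarith [ih.s1 j]
  · -- p2
    intro k
    rw [hAS, hAS]
    nlinarith [ih.la k, ih.p3 k, ih.p1 k]
  · -- p3
    intro k
    cases k with
    | zero =>
      rw [hA0, hAS]
      nlinarith [ih.la 0, ih.p2 0, mul_nonneg (ih.na 1) (ih.nb 0)]
    | succ j =>
      rw [hAS, hAS]
      nlinarith [ih.la (j + 1), ih.p2 (j + 1), ih.d3 j]
  · -- s10
    rw [hA0, hAS]
    nlinarith [ih.p1 0, sq_nonneg (a 0), mul_self_nonneg (a 0)]
  · -- s1
    intro k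
    rw [hAS, hAS]
    nlinarith [ih.la k, ih.p1 k, ih.p1 (k + 1), ih.d2 k]

/-- The base invariant for the pair of rows `Q 3`, `Q 2`. -/
lemma inv_base : LCInv (q 3) (q 2) := by
  have h2 : ∀ k, q 2 k = if k = 0 then 3 else if k = 1 then 2 else 0 := by
    intro k
    match k with
    | 0 => simpa using q2_0
    | 1 => simpa using q2_1
    | (j + 2) => simpa using q2_big j
  have h3 : ∀ k, q 3 k = if k = 0 then 4 else if k = 1 then 3 else 0 := by
    intro k
    match k with
    | 0 => simpa using q3_0
    | 1 => simpa using q3_1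
    | (j + 2) => simpa using q3_big j
  constructor <;>
    first
    | (intro k
       match k with
       | 0 => simp [h2, h3]
       | 1 => simp [h2, h3]
       | (j + 2) => simp [h2, h3])
    | simp [h2, h3]

/-- The invariant holds for every consecutive pair of rows. -/
lemma inv_all (n : ℕ) : LCInv (q (n + 3)) (q (n + 2)) := by
  induction n with
  | zero => exact inv_base
  | succ m ih =>
    exact inv_step ih (q_rec0 m) (fun k => q_recS m k)

theorem coeff_Q_log_concave (n : ℕ) (hn : 2 ≤ n) (k : ℕ) (hk : 1 ≤ k) :
    q n (k - 1) * q n (k + 1) ≤ q n k ^ 2 := by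
  obtain ⟨j, rfl⟩ : ∃ j, k = j + 1 := ⟨k - 1, by omega⟩
  have hj : j + 1 - 1 = j := by omega
  rw [hj]
  match n, hn with
  | 2, _ =>
    match j with
    | 0 => simp [q2_big, q2_1]
    | (i + 1) =>
      have : i + 1 + 1 + 1 = i + 3 := by omega
      rw [show (i + 1) + 1 + 1 = (i + 1) + 2 by ring, q2_big]
      rw [mul_zero]
      positivity
  | (m + 3), _ =>
    have h := (inv_all m).la j
    nlinarith [h]
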